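/- If Δ ⊆ ℕ → Σ is a dictionary over a countable alphabet Σ such that every word in Δ uses only finitely many letters, then the codebreaker has a strategy that always wins at some finite stage of play. -/
import Mathlib

open Classical in
noncomputable def wordlePick {α : Type*} (A : Set (ℕ → α)) (w : ℕ → α)
    (C : Set (ℕ → α)) : ℕ → α :=
  if h : (C ∩ A).Nonempty then h.some else if h2 : C.Nonempty then h2.some else w

noncomputable def wordleG {α : Type*} (Δ : Set (ℕ → α)) (A : ℕ → Set (ℕ → α))
    (w : ℕ → α) : ℕ → (ℕ → α)
  | k =>
    wordlePick (A k) w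
      {u | u ∈ Δ ∧ ∀ j, ∀ hj : j < k, ∀ i,
        (wordleG Δ A w j i = u i ↔ wordleG Δ A w j i = w i)}
decreasing_by exact hj

def wordleC {α : Type*} (Δ : Set (ℕ → α)) (A : ℕ → Set (ℕ → α))
    (w : ℕ → α) (k : ℕ) : Set (ℕ → α) :=
  {u | u ∈ Δ ∧ ∀ j, ∀ _ : j < k, ∀ i,
    (wordleG Δ A w j i = u i ↔ wordleG Δ A w j i = w i)}

theorem wordleG_eq {α : Type*} (Δ : Set (ℕ → α)) (A : ℕ → Set (ℕ → α))
    (w : ℕ → α) (k : ℕ) :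
    wordleG Δ A w k = wordlePick (A k) w (wordleC Δ A w k) := by
  rw [wordleG]; rfl

theorem self_mem_wordleC {α : Type*} {Δ : Set (ℕ → α)} (A : ℕ → Set (ℕ → α))
    {w : ℕ → α} (hw : w ∈ Δ) (k : ℕ) : w ∈ wordleC Δ A w k :=
  ⟨hw, fun _ _ _ => Iff.rfl⟩

theorem wordleG_mem_C {α : Type*} {Δ : Set (ℕ → α)} (A : ℕ → Set (ℕ → α))
    {w : ℕ → α} (hw : w ∈ Δ) (k : ℕ) : wordleG Δ A w k ∈ wordleC Δ A w k := by
  rw [wordleG_eq]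
  unfold wordlePick
  split_ifs with h1 h2
  · exact h1.some_mem.1
  · exact h2.some_mem
  · exact absurd ⟨w, self_mem_wordleC A hw k⟩ h2

theorem wordleG_mem_A {α : Type*} {Δ : Set (ℕ → α)} (A : ℕ → Set (ℕ → α))
    {w : ℕ → α} (k : ℕ) (hne : (wordleC Δ A w k ∩ A k).Nonempty) :
    wordleG Δ A w k ∈ A k := by
  rw [wordleG_eq]
  unfold wordlePick
  rw [dif_pos hne]
  exact hne.some_mem.2

theorem wordlePick_congr {α : Type*} (A : Set (ℕ → α)) (w w' : ℕ → α)
    {C : Set (ℕ → α)} (hC : C.Nonempty) :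
    wordlePick A w C = wordlePick A w' C := by
  unfold wordlePick
  split_ifs <;> first | rfl | exact absurd hC ‹¬ C.Nonempty›

theorem wordleG_adapt {α : Type*} {Δ : Set (ℕ → α)} (A : ℕ → Set (ℕ → α))
    {w w' : ℕ → α} (hw : w ∈ Δ) (hw' : w' ∈ Δ) (k : ℕ)
    (h : ∀ j < k, {i : ℕ | wordleG Δ A w j i = w i}
        = {i : ℕ | wordleG Δ A w' j i = w' i}) :
    wordleG Δ A w k = wordleG Δ A w' k := by
  induction k using Nat.strong_induction_on with
  | _ k ih =>
    have hGj : ∀ j < k, wordleG Δ A w j = wordleG Δ A w' j :=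
      fun j hj => ih j hj (fun l hl => h l (hl.trans hj))
    have hC : wordleC Δ A w k = wordleC Δ A w' k := by
      ext u
      constructor <;> rintro ⟨hu, hcons⟩ <;> refine ⟨hu, fun j hj i => ?_⟩ <;>
          have hfb := (Set.ext_iff.mp (h j hj) i) <;>
          simp only [Set.mem_setOf_eq] at hfb
      · rw [← hGj j hj] at hfb ⊢
        exact (hcons j hj i).trans hfb
      · rw [hGj j hj] at hfb ⊢
        exact (hcons j hj i).trans hfb.symm
    rw [wordleG_eq, wordleG_eq, hC]
    exact wordlePick_congr _ _ _ ⟨w', self_mem_wordleC A hw' k⟩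

def wordleB {α : Type*} (σ : ℕ → Finset α) : ℕ → ℕ
  | 0 => 0
  | m + 1 => wordleB σ m + (σ m).card + 1

theorem le_wordleB {α : Type*} (σ : ℕ → Finset α) : ∀ m, m ≤ wordleB σ m
  | 0 => le_refl 0
  | m + 1 => by have := le_wordleB σ m; simp only [wordleB]; omega

theorem wordleB_strictMono {α : Type*} (σ : ℕ → Finset α) :
    StrictMono (wordleB σ) :=
  strictMono_nat_of_lt_succ (fun m => by simp only [wordleB]; omega)

noncomputable def wordleBlk {α : Type*} (σ : ℕ → Finset α) (k : ℕ) : ℕ :=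
  Nat.findGreatest (fun m => wordleB σ m ≤ k) k

theorem wordleBlk_eq {α : Type*} (σ : ℕ → Finset α) {m k : ℕ}
    (h1 : wordleB σ m ≤ k) (h2 : k < wordleB σ (m + 1)) :
    wordleBlk σ k = m := by
  have hmk : m ≤ k := (le_wordleB σ m).trans h1
  unfold wordleBlk
  rw [Nat.findGreatest_eq_iff]
  refine ⟨hmk, fun _ => h1, fun n hn _ hP => ?_⟩
  have : wordleB σ (m + 1) ≤ wordleB σ n := (wordleB_strictMono σ).monotone hn
  omega

def wordleA {α : Type*} (σ : ℕ → Finset α) : ℕ → Set (ℕ → α) :=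
  fun k => {u | ∀ i, u i ∈ σ (wordleBlk σ k)}

theorem wordle_win {α : Type*} {Δ : Set (ℕ → α)} (σ : ℕ → Finset α)
    {w : ℕ → α} (hw : w ∈ Δ) (m : ℕ) (hσ : ∀ i, w i ∈ σ m) :
    ∃ k, wordleG Δ (wordleA σ) w k = w := by
  by_contra hno
  push_neg at hno
  set A := wordleA σ with hA
  set n := (σ m).card with hn
  set B := wordleB σ m with hB
  have hblk : ∀ d, d ≤ n → wordleBlk σ (B + d) = m := by
    intro d hd
    exact wordleBlk_eq σ (by omega) (by simp only [wordleB]; omega)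
  have hmemσ : ∀ d, d ≤ n → ∀ i, wordleG Δ A w (B + d) i ∈ σ m := by
    intro d hd i
    have hne : (wordleC Δ A w (B + d) ∩ A (B + d)).Nonempty := by
      refine ⟨w, self_mem_wordleC A hw _, ?_⟩
      show ∀ i, w i ∈ σ (wordleBlk σ (B + d))
      rw [hblk d hd]; exact hσ
    have := wordleG_mem_A A (B + d) hne
    have h2 : wordleG Δ A w (B + d) ∈ {u : ℕ → α | ∀ i, u i ∈ σ (wordleBlk σ (B + d))} := this
    have := h2 i
    rwa [hblk d hd] at this
  obtain ⟨i, hi⟩ : ∃ i, wordleG Δ A w (B + n) i ≠ w i :=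
    Function.ne_iff.mp (hno (B + n))
  have claim1 : ∀ d, d ≤ n → wordleG Δ A w (B + d) i ≠ w i := by
    intro d hd heq
    rcases eq_or_lt_of_le hd with h | h
    · exact hi (h ▸ heq)
    · have hc := (wordleG_mem_C A hw (B + n)).2 (B + d) (by omega) i
      have h2 := hc.mpr heq
      exact hi (h2.symm.trans heq)
  have claim2 : ∀ d d', d < d' → d' ≤ n →
      wordleG Δ A w (B + d) i ≠ wordleG Δ A w (B + d') i := by
    intro d d' hdd' hd' heq
    have hc := (wordleG_mem_C A hw (B + d')).2 (B + d) (by omega) i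
    exact claim1 d (by omega) (hc.mp heq)
  set f : Fin (n + 2) → α :=
    fun j => if (j : ℕ) < n + 1 then wordleG Δ A w (B + (j : ℕ)) i else w i with hf
  have hfmem : ∀ j : Fin (n + 2), f j ∈ σ m := by
    intro j
    rw [hf]
    dsimp only
    split_ifs with h
    · exact hmemσ (j : ℕ) (by omega) i
    · exact hσ i
  have hfinj : Function.Injective f := by
    intro a b hab
    rw [hf] at hab
    dsimp only at hab
    rcases lt_or_ge (a : ℕ) (n + 1) with ha | ha <;>
      rcases lt_or_ge (b : ℕ) (n + 1) with hb | hb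
    · rw [if_pos ha, if_pos hb] at hab
      rcases lt_trichotomy (a : ℕ) (b : ℕ) with h | h | h
      · exact absurd hab (claim2 _ _ h (by omega))
      · exact Fin.ext h
      · exact absurd hab.symm (claim2 _ _ h (by omega))
    · rw [if_pos ha, if_neg (by omega)] at hab
      exact absurd hab (claim1 _ (by omega))
    · rw [if_neg (by omega), if_pos hb] at hab
      exact absurd hab.symm (claim1 _ (by omega))
    · have : (a : ℕ) = (b : ℕ) := by omega
      exact Fin.ext this
  have hcard := Finset.card_le_card_of_injOn (s := Finset.univ) (t := σ m) f
    (fun j _ => hfmem j) hfinj.injOn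
  simp only [Finset.card_univ, Fintype.card_fin] at hcard
  omega

/-- Infinite Wordle on a countable alphabet: if every word of the dictionary
`Δ ⊆ ℕ → α` uses only finitely many letters (finite range), then the
codebreaker has an adaptive strategy (using the green positional feedback)
that always wins at some finite stage. -/
theorem wordle_finitely_many_letters_finite_win (α : Type*) [Countable α]
    (Δ : Set (ℕ → α)) (hfin : ∀ w ∈ Δ, (Set.range w).Finite) :
    ∃ G : (ℕ → α) → ℕ → (ℕ → α),
      (∀ w ∈ Δ, ∀ k : ℕ, G w k ∈ Δ) ∧
      (∀ w ∈ Δ, ∀ w' ∈ Δ, ∀ k : ℕ,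
        (∀ j < k, {i : ℕ | G w j i = w i} = {i : ℕ | G w' j i = w' i}) →
          G w k = G w' k) ∧
      (∀ w ∈ Δ, ∃ k : ℕ, G w k = w) := by
  obtain ⟨σ, hσ⟩ := exists_surjective_nat (Finset α)
  refine ⟨wordleG Δ (wordleA σ), ?_, ?_, ?_⟩
  · exact fun w hw k => (wordleG_mem_C (wordleA σ) hw k).1
  · exact fun w hw w' hw' k h => wordleG_adapt (wordleA σ) hw hw' k h
  · intro w hw
    obtain ⟨m, hm⟩ := hσ (hfin w hw).toFinset
    refine wordle_win σ hw m (fun i => ?_)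
    rw [hm, Set.Finite.mem_toFinset]
    exact Set.mem_range_self i
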